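/- Coherent relative entropy for product states: Let σ_X be a normalized state supported in supp(Γ_X) and ρ_{X'} a normalized state supported in supp(Γ_{X'}). Then D̂_{X→X'}(t_{X→R_X}(σ_X) ⊗ ρ_{X'}‖Γ_X, Γ_{X'}) ≥ Dmin(σ_X‖Γ_X) − Dmax(ρ_{X'}‖Γ_{X'}). -/

import Mathlib

open scoped ComplexOrder Classical
open Matrix Kronecker

noncomputable section

/-- Square root of a positive semidefinite matrix (junk value `0` otherwise). -/
def psqrt {ι : Type*} [Fintype ι] [DecidableEq ι] (A : Matrix ι ι ℂ) : Matrix ι ι ℂ :=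
  if h : A.PosSemidef then
    (h.1.eigenvectorUnitary : Matrix ι ι ℂ) *
      Matrix.diagonal ((↑) ∘ Real.sqrt ∘ h.1.eigenvalues) *
      (star h.1.eigenvectorUnitary : Matrix ι ι ℂ)
  else 0

/-- Löwner order: `Loewner A B` means `A ≤ B`, i.e. `B - A` is positive semidefinite. -/
def Loewner {ι : Type*} [Fintype ι] (A B : Matrix ι ι ℂ) : Prop := (B - A).PosSemidef

/-- Trace norm of a matrix. -/
def traceNorm {ι : Type*} [Fintype ι] [DecidableEq ι] (M : Matrix ι ι ℂ) : ℝ :=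
  (psqrt (Mᴴ * M)).trace.re

/-- Generalized fidelity of subnormalized states. -/
def gFid {ι : Type*} [Fintype ι] [DecidableEq ι] (ρ σ : Matrix ι ι ℂ) : ℝ :=
  traceNorm (psqrt ρ * psqrt σ) + Real.sqrt ((1 - ρ.trace.re) * (1 - σ.trace.re))

/-- Purified distance. -/
def pDist {ι : Type*} [Fintype ι] [DecidableEq ι] (ρ σ : Matrix ι ι ℂ) : ℝ :=
  Real.sqrt (1 - (gFid ρ σ) ^ 2)

/-- Choi matrix of a linear map on matrices. -/
def choi {ι κ : Type*} [Fintype ι] [DecidableEq ι] [Fintype κ]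
    (Φ : Matrix ι ι ℂ →ₗ[ℂ] Matrix κ κ ℂ) : Matrix (κ × ι) (κ × ι) ℂ :=
  Matrix.of fun p q => Φ (Matrix.single p.2 q.2 1) p.1 q.1

/-- Completely positive map: positive semidefinite Choi matrix. -/
def IsCP {ι κ : Type*} [Fintype ι] [DecidableEq ι] [Fintype κ]
    (Φ : Matrix ι ι ℂ →ₗ[ℂ] Matrix κ κ ℂ) : Prop := (choi Φ).PosSemidef

/-- Trace-nonincreasing map. -/
def TNI {ι κ : Type*} [Fintype ι] [Fintype κ]
    (Φ : Matrix ι ι ℂ →ₗ[ℂ] Matrix κ κ ℂ) : Prop :=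
  ∀ ω : Matrix ι ι ℂ, ω.PosSemidef → (Φ ω).trace.re ≤ ω.trace.re

/-- Trace-preserving map. -/
def TP {ι κ : Type*} [Fintype ι] [Fintype κ]
    (Φ : Matrix ι ι ℂ →ₗ[ℂ] Matrix κ κ ℂ) : Prop :=
  ∀ ω : Matrix ι ι ℂ, (Φ ω).trace = ω.trace

/-- Apply `Φ ⊗ id` to a bipartite matrix (`Φ` acts on the first tensor factor). -/
def tensorIdApply {ι κ r : Type*} [Fintype ι] [Fintype κ] [Fintype r]
    (Φ : Matrix ι ι ℂ →ₗ[ℂ] Matrix κ κ ℂ)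
    (M : Matrix (ι × r) (ι × r) ℂ) : Matrix (κ × r) (κ × r) ℂ :=
  Matrix.of fun p q => Φ (Matrix.of fun a b => M (a, p.2) (b, q.2)) p.1 q.1

/-- Partial trace over the first tensor factor. -/
def ptraceLeft {a b : Type*} [Fintype a] (M : Matrix (a × b) (a × b) ℂ) : Matrix b b ℂ :=
  Matrix.of fun i j => ∑ k, M (k, i) (k, j)

/-- Partial trace over the second tensor factor. -/
def ptraceRight {a b : Type*} [Fintype b] (M : Matrix (a × b) (a × b) ℂ) : Matrix a a ℂ :=
  Matrix.of fun i j => ∑ k, M (i, k) (j, k)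

/-- `SuppIn A B`: the support (range) of `A` is contained in the support of `B`. -/
def SuppIn {ι : Type*} [Fintype ι] (A B : Matrix ι ι ℂ) : Prop :=
  LinearMap.range A.mulVecLin ≤ LinearMap.range B.mulVecLin

/-- The purification `σ^{1/2} |Φ⟩⟨Φ| σ^{1/2}` of a state `σ` on `X`, as a state on `X ⊗ R_X`. -/
def purif {ι : Type*} [Fintype ι] [DecidableEq ι] (σ : Matrix ι ι ℂ) :
    Matrix (ι × ι) (ι × ι) ℂ :=
  Matrix.of fun p q => psqrt σ p.1 p.2 * psqrt σ q.2 q.1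

/-- The canonical input purification `σ_{XR_X} = ρ_{R_X}^{1/2} |Φ⟩⟨Φ| ρ_{R_X}^{1/2}`
associated with a process matrix `ρ` on `X' ⊗ R_X`. -/
def inputPurif {κ ι : Type*} [Fintype κ] [Fintype ι] [DecidableEq ι]
    (ρ : Matrix (κ × ι) (κ × ι) ℂ) : Matrix (ι × ι) (ι × ι) ℂ :=
  Matrix.of fun p q => psqrt (ptraceLeft ρ) p.2 p.1 * psqrt (ptraceLeft ρ) q.1 q.2

/-- The ε-smooth coherent relative entropy `D̂^ε_{X→X'}(ρ_{X'R_X} ‖ Γ_X, Γ_{X'})`. -/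
def DCoh {ι κ : Type*} [Fintype ι] [DecidableEq ι] [Fintype κ] [DecidableEq κ]
    (ε : ℝ) (ρ : Matrix (κ × ι) (κ × ι) ℂ)
    (ΓX : Matrix ι ι ℂ) (ΓX' : Matrix κ κ ℂ) : ℝ :=
  sSup { y : ℝ | ∃ T : Matrix ι ι ℂ →ₗ[ℂ] Matrix κ κ ℂ,
    IsCP T ∧ TNI T ∧ Loewner (T ΓX) ((((2 : ℝ) ^ (-y) : ℝ) : ℂ) • ΓX') ∧
    pDist (tensorIdApply T (inputPurif ρ)) ρ ≤ ε }

/-- Apply a real function to a Hermitian matrix via the spectral decomposition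
(junk value `0` on non-Hermitian matrices). -/
def hfun {ι : Type*} [Fintype ι] [DecidableEq ι] (f : ℝ → ℝ) (A : Matrix ι ι ℂ) :
    Matrix ι ι ℂ :=
  if h : A.IsHermitian then
    (h.eigenvectorUnitary : Matrix ι ι ℂ) *
      Matrix.diagonal (fun i => (f (h.eigenvalues i) : ℂ)) *
      star (h.eigenvectorUnitary : Matrix ι ι ℂ)
  else 0

/-- Projector onto the support of a Hermitian matrix. -/
def suppProj {ι : Type*} [Fintype ι] [DecidableEq ι] (A : Matrix ι ι ℂ) : Matrix ι ι ℂ :=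
  hfun (fun x => if x = 0 then 0 else 1) A

/-- Pseudo-inverse (on the support) of a Hermitian matrix. -/
def pinv {ι : Type*} [Fintype ι] [DecidableEq ι] (A : Matrix ι ι ℂ) : Matrix ι ι ℂ :=
  hfun (fun x => if x = 0 then 0 else x⁻¹) A

/-- Pseudo-inverse square root (on the support) of a positive semidefinite matrix. -/
def pinvSqrt {ι : Type*} [Fintype ι] [DecidableEq ι] (A : Matrix ι ι ℂ) : Matrix ι ι ℂ :=
  hfun (fun x => if x ≤ 0 then 0 else (Real.sqrt x)⁻¹) A

/-- Matrix logarithm in base 2 (on the support). -/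
def mlog2 {ι : Type*} [Fintype ι] [DecidableEq ι] (A : Matrix ι ι ℂ) : Matrix ι ι ℂ :=
  hfun (fun x => if x ≤ 0 then 0 else Real.logb 2 x) A

/-- Operator norm (as the least `c ≥ 0` with `MᴴM ≤ c²·1`). -/
def opNorm {ι : Type*} [Fintype ι] [DecidableEq ι] (M : Matrix ι ι ℂ) : ℝ :=
  sInf {c : ℝ | 0 ≤ c ∧ Loewner (Mᴴ * M) (((c ^ 2 : ℝ) : ℂ) • (1 : Matrix ι ι ℂ))}

/-- Quantum relative entropy `D(ρ‖Γ)`, base 2. -/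
def relEnt {ι : Type*} [Fintype ι] [DecidableEq ι] (ρ Γ : Matrix ι ι ℂ) : ℝ :=
  (ρ * (mlog2 ρ - mlog2 Γ)).trace.re

/-- Min-relative entropy `Dmin(ρ‖Γ) = −log tr(Π^ρ Γ)`. -/
def Dmin {ι : Type*} [Fintype ι] [DecidableEq ι] (ρ Γ : Matrix ι ι ℂ) : ℝ :=
  - Real.logb 2 ((suppProj ρ * Γ).trace.re)

/-- Max-relative entropy `Dmax(ρ‖Γ) = log min {μ ≥ 0 : ρ ≤ μΓ}`. -/
def Dmax {ι : Type*} [Fintype ι] [DecidableEq ι] (ρ Γ : Matrix ι ι ℂ) : ℝ :=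
  Real.logb 2 (sInf {μ : ℝ | 0 ≤ μ ∧ Loewner ρ ((μ : ℂ) • Γ)})

/-- Rob entropy `D_R(ρ‖Γ) = −log min {ν ≥ 0 : Π^ρ Γ Π^ρ ≤ ν ρ}`. -/
def DR {ι : Type*} [Fintype ι] [DecidableEq ι] (ρ Γ : Matrix ι ι ℂ) : ℝ :=
  - Real.logb 2
    (sInf {ν : ℝ | 0 ≤ ν ∧ Loewner (suppProj ρ * Γ * suppProj ρ) ((ν : ℂ) • ρ)})

/-- Smooth min-relative entropy. -/
def Dminε {ι : Type*} [Fintype ι] [DecidableEq ι] (ε : ℝ) (ρ Γ : Matrix ι ι ℂ) : ℝ :=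
  sSup {v : ℝ | ∃ ρ' : Matrix ι ι ℂ,
    ρ'.PosSemidef ∧ ρ'.trace = 1 ∧ pDist ρ' ρ ≤ ε ∧ v = Dmin ρ' Γ}

/-- Smooth max-relative entropy. -/
def Dmaxε {ι : Type*} [Fintype ι] [DecidableEq ι] (ε : ℝ) (ρ Γ : Matrix ι ι ℂ) : ℝ :=
  sInf {v : ℝ | ∃ ρ' : Matrix ι ι ℂ,
    ρ'.PosSemidef ∧ ρ'.trace = 1 ∧ pDist ρ' ρ ≤ ε ∧ v = Dmax ρ' Γ}

/-- Smooth Rob entropy. -/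
def DRε {ι : Type*} [Fintype ι] [DecidableEq ι] (ε : ℝ) (ρ Γ : Matrix ι ι ℂ) : ℝ :=
  sSup {v : ℝ | ∃ ρ' : Matrix ι ι ℂ,
    ρ'.PosSemidef ∧ ρ'.trace = 1 ∧ pDist ρ' ρ ≤ ε ∧ v = DR ρ' Γ}

/-- The alternatively-smoothed coherent relative entropy `D̂x^ε`. -/
def DCohx {ι κ : Type*} [Fintype ι] [DecidableEq ι] [Fintype κ] [DecidableEq κ]
    (ε : ℝ) (ρ : Matrix (κ × ι) (κ × ι) ℂ)
    (ΓX : Matrix ι ι ℂ) (ΓX' : Matrix κ κ ℂ) : ℝ :=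
  sSup {v : ℝ | ∃ ρ' : Matrix (κ × ι) (κ × ι) ℂ,
    ρ'.PosSemidef ∧ ρ'.trace = 1 ∧ pDist ρ' ρ ≤ ε ∧
    SuppIn ρ' (ΓX' ⊗ₖ ΓXᵀ) ∧ v = DCoh 0 ρ' ΓX ΓX'}

/-- Conditional min-entropy `Hmin(A|B)` of a bipartite state (A is the first factor). -/
def condHmin {a b : Type*} [Fintype a] [DecidableEq a] [Fintype b] [DecidableEq b]
    (ρ : Matrix (a × b) (a × b) ℂ) : ℝ :=
  - Real.logb 2 (opNorm
      (((1 : Matrix a a ℂ) ⊗ₖ pinvSqrt (ptraceLeft ρ)) * ρ *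
        ((1 : Matrix a a ℂ) ⊗ₖ pinvSqrt (ptraceLeft ρ))))

/-- Conditional (alternative) max-entropy `H₀(A|B)` of a bipartite state. -/
def condH0 {a b : Type*} [Fintype a] [DecidableEq a] [Fintype b] [DecidableEq b]
    (ρ : Matrix (a × b) (a × b) ℂ) : ℝ :=
  Real.logb 2 (opNorm (ptraceLeft (suppProj ρ)))

/-- Smooth conditional min-entropy. -/
def condHminε {a b : Type*} [Fintype a] [DecidableEq a] [Fintype b] [DecidableEq b]
    (ε : ℝ) (ρ : Matrix (a × b) (a × b) ℂ) : ℝ :=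
  sSup {v : ℝ | ∃ ρ' : Matrix (a × b) (a × b) ℂ,
    ρ'.PosSemidef ∧ ρ'.trace = 1 ∧ pDist ρ' ρ ≤ ε ∧ v = condHmin ρ'}

/-- Smooth conditional max-entropy. -/
def condH0ε {a b : Type*} [Fintype a] [DecidableEq a] [Fintype b] [DecidableEq b]
    (ε : ℝ) (ρ : Matrix (a × b) (a × b) ℂ) : ℝ :=
  sInf {v : ℝ | ∃ ρ' : Matrix (a × b) (a × b) ℂ,
    ρ'.PosSemidef ∧ ρ'.trace = 1 ∧ pDist ρ' ρ ≤ ε ∧ v = condH0 ρ'}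

/-- `N`-fold Kronecker tensor power of a matrix. -/
def kronPow {ι : Type*} (A : Matrix ι ι ℂ) (N : ℕ) :
    Matrix (Fin N → ι) (Fin N → ι) ℂ :=
  Matrix.of fun f g => ∏ i, A (f i) (g i)

/-- `N`-fold tensor power of a bipartite state, with the tensor factors regrouped. -/
def statePow {a b : Type*} (ρ : Matrix (a × b) (a × b) ℂ) (N : ℕ) :
    Matrix ((Fin N → a) × (Fin N → b)) ((Fin N → a) × (Fin N → b)) ℂ :=
  Matrix.of fun p q => ∏ i, ρ (p.1 i, p.2 i) (q.1 i, q.2 i)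

/-- Tensor product of two bipartite states, with the tensor factors regrouped. -/
def pairState {a₁ b₁ a₂ b₂ : Type*}
    (ρ : Matrix (a₁ × b₁) (a₁ × b₁) ℂ) (ζ : Matrix (a₂ × b₂) (a₂ × b₂) ℂ) :
    Matrix ((a₁ × a₂) × (b₁ × b₂)) ((a₁ × a₂) × (b₁ × b₂)) ℂ :=
  Matrix.of fun p q =>
    ρ (p.1.1, p.2.1) (q.1.1, q.2.1) * ζ (p.1.2, p.2.2) (q.1.2, q.2.2)

end

section HfunCalc
open Matrix
variable {ι : Type*} [Fintype ι] [DecidableEq ι] {A : Matrix ι ι ℂ}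

lemma hfun_eq (h : A.IsHermitian) (f : ℝ → ℝ) :
    hfun f A = (h.eigenvectorUnitary : Matrix ι ι ℂ) *
      Matrix.diagonal (fun i => (f (h.eigenvalues i) : ℂ)) *
      star (h.eigenvectorUnitary : Matrix ι ι ℂ) := by
  rw [hfun, dif_pos h]

lemma star_mul_self_eigen (h : A.IsHermitian) :
    star (h.eigenvectorUnitary : Matrix ι ι ℂ) * (h.eigenvectorUnitary : Matrix ι ι ℂ) = 1 :=
  Matrix.mem_unitaryGroup_iff'.mp h.eigenvectorUnitary.2

lemma self_mul_star_eigen (h : A.IsHermitian) :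
    (h.eigenvectorUnitary : Matrix ι ι ℂ) * star (h.eigenvectorUnitary : Matrix ι ι ℂ) = 1 :=
  Matrix.mem_unitaryGroup_iff.mp h.eigenvectorUnitary.2

lemma hfun_mul (h : A.IsHermitian) (f g : ℝ → ℝ) :
    hfun f A * hfun g A = hfun (fun x => f x * g x) A := by
  rw [hfun_eq h f, hfun_eq h g, hfun_eq h]
  set U := (h.eigenvectorUnitary : Matrix ι ι ℂ) with hU
  calc (U * Matrix.diagonal (fun i => (f (h.eigenvalues i) : ℂ)) * star U) *
        (U * Matrix.diagonal (fun i => (g (h.eigenvalues i) : ℂ)) * star U)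
      = U * (Matrix.diagonal (fun i => (f (h.eigenvalues i) : ℂ)) * ((star U * U) *
          Matrix.diagonal (fun i => (g (h.eigenvalues i) : ℂ)))) * star U := by
        simp only [Matrix.mul_assoc]
    _ = U * Matrix.diagonal (fun i => ((f (h.eigenvalues i) * g (h.eigenvalues i) : ℝ) : ℂ)) *
          star U := by
        rw [star_mul_self_eigen h, Matrix.one_mul, Matrix.diagonal_mul_diagonal]
        simp only [Matrix.mul_assoc]
        norm_cast
    _ = _ := rfl

lemma hfun_congr (h : A.IsHermitian) {f g : ℝ → ℝ}
    (hfg : ∀ i, f (h.eigenvalues i) = g (h.eigenvalues i)) : hfun f A = hfun g A := by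
  rw [hfun_eq h f, hfun_eq h g]
  have hd : (fun i => ((f (h.eigenvalues i) : ℝ) : ℂ)) =
      fun i => ((g (h.eigenvalues i) : ℝ) : ℂ) := funext fun i => by rw [hfg i]
  rw [hd]

lemma hfun_id (h : A.IsHermitian) : hfun (fun x => x) A = A := by
  rw [hfun_eq h]
  exact h.spectral_theorem.symm

lemma hfun_one (h : A.IsHermitian) : hfun (fun _ => (1 : ℝ)) A = 1 := by
  rw [hfun_eq h]
  simp [self_mul_star_eigen h]

lemma hfun_sub (h : A.IsHermitian) (f g : ℝ → ℝ) :
    hfun f A - hfun g A = hfun (fun x => f x - g x) A := by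
  rw [hfun_eq h f, hfun_eq h g, hfun_eq h]
  rw [← Matrix.sub_mul, ← Matrix.mul_sub, Matrix.diagonal_sub]
  norm_cast

lemma hfun_smul (h : A.IsHermitian) (c : ℝ) (f : ℝ → ℝ) :
    (c : ℂ) • hfun f A = hfun (fun x => c * f x) A := by
  rw [hfun_eq h f, hfun_eq h]
  have hd : Matrix.diagonal (fun i => ((c * f (h.eigenvalues i) : ℝ) : ℂ))
      = (c : ℂ) • Matrix.diagonal (fun i => ((f (h.eigenvalues i) : ℝ) : ℂ)) := by
    ext i j
    rcases eq_or_ne i j with rfl | hij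
    · simp
    · simp [Matrix.diagonal_apply_ne _ hij]
  rw [hd, Matrix.mul_smul, Matrix.smul_mul]

lemma hfun_isHermitian (h : A.IsHermitian) (f : ℝ → ℝ) : (hfun f A).IsHermitian := by
  rw [hfun_eq h, Matrix.star_eq_conjTranspose]
  have hD : (Matrix.diagonal (fun i => ((f (h.eigenvalues i) : ℝ) : ℂ))).IsHermitian := by
    apply Matrix.isHermitian_diagonal_of_self_adjoint
    ext i
    simp [_root_.IsSelfAdjoint, Complex.conj_ofReal]
  exact Matrix.isHermitian_mul_mul_conjTranspose _ hD

lemma hfun_posSemidef (h : A.IsHermitian) (f : ℝ → ℝ)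
    (hf : ∀ i, 0 ≤ f (h.eigenvalues i)) : (hfun f A).PosSemidef := by
  rw [hfun_eq h, Matrix.star_eq_conjTranspose]
  exact (Matrix.posSemidef_diagonal_iff.mpr fun i => by
    simpa using Complex.zero_le_real.mpr (hf i)).mul_mul_conjTranspose_same _

lemma hfun_trace (h : A.IsHermitian) (f : ℝ → ℝ) :
    (hfun f A).trace = ∑ i, (f (h.eigenvalues i) : ℂ) := by
  rw [hfun_eq h, Matrix.trace_mul_cycle, star_mul_self_eigen h,
    Matrix.one_mul, Matrix.trace_diagonal]

end HfunCalc
section PsqrtCalc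
open Matrix
variable {ι : Type*} [Fintype ι] [DecidableEq ι] {A : Matrix ι ι ℂ}

lemma psqrt_of_psd (hA : A.PosSemidef) : psqrt A = hfun Real.sqrt A := by
  rw [psqrt, dif_pos hA, hfun_eq hA.1]
  rfl

lemma psqrt_eq_hfun (hA : A.PosSemidef) : psqrt A = hfun Real.sqrt A :=
  psqrt_of_psd hA

lemma psqrt_posSemidef (hA : A.PosSemidef) : (psqrt A).PosSemidef := by
  rw [psqrt_of_psd hA]; exact hfun_posSemidef hA.1 _ fun i => Real.sqrt_nonneg _

lemma psqrt_mul_self (hA : A.PosSemidef) : psqrt A * psqrt A = A := by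
  rw [psqrt_of_psd hA, hfun_mul hA.1,
    hfun_congr hA.1 (g := fun x => x) (fun i => Real.mul_self_sqrt (hA.eigenvalues_nonneg i)),
    hfun_id hA.1]

open scoped MatrixOrder in
lemma psqrt_unique {B : Matrix ι ι ℂ} (hA : A.PosSemidef) (hB : B.PosSemidef)
    (h : B * B = A) : psqrt A = B := by
  have h1 : CFC.sqrt A = B := CFC.sqrt_unique h hB.nonneg
  rw [CFC.sqrt_eq_real_sqrt A hA.nonneg, cfcₙ_eq_cfc, hA.1.cfc_eq,
    Matrix.IsHermitian.cfc, Unitary.conjStarAlgAut_apply] at h1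
  rw [← h1, psqrt, dif_pos hA]
  rfl

lemma psqrt_mul_self' (hA : A.PosSemidef) : psqrt (A * A) = A := by
  have hAA : (A * A).PosSemidef := by rw [← pow_two]; exact hA.pow 2
  exact psqrt_unique hAA hA rfl

lemma psqrt_transpose (hA : A.PosSemidef) : psqrt Aᵀ = (psqrt A)ᵀ := by
  have hT : Aᵀ.PosSemidef := hA.transpose
  refine psqrt_unique hT (psqrt_posSemidef hA).transpose ?_
  rw [← Matrix.transpose_mul, psqrt_mul_self hA]

lemma psqrt_zero : psqrt (0 : Matrix ι ι ℂ) = 0 := by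
  have h0 : (0 : Matrix ι ι ℂ).PosSemidef := Matrix.PosSemidef.zero
  exact psqrt_unique h0 h0 (Matrix.mul_zero 0)

/-- trace of a PSD matrix is nonnegative (in the complex order). -/
lemma psd_trace_nonneg (hA : A.PosSemidef) : 0 ≤ A.trace := by
  have h : ∀ i, 0 ≤ A i i := by
    intro i
    have := hA.dotProduct_mulVec_nonneg (Pi.single i 1)
    simpa [Matrix.mulVec_single, dotProduct, Pi.single_apply, apply_ite] using this
  exact Finset.sum_nonneg fun i _ => h i

lemma psd_trace_re_nonneg (hA : A.PosSemidef) : 0 ≤ A.trace.re :=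
  (Complex.nonneg_iff.mp (psd_trace_nonneg hA)).1

lemma psd_trace_eq_re (hA : A.PosSemidef) : A.trace = (A.trace.re : ℂ) := by
  have h := (Complex.nonneg_iff.mp (psd_trace_nonneg hA)).2
  exact ((Complex.ext (by simp) (by simp [← h])).symm : A.trace = (A.trace.re : ℂ))

/-- trace of a product of PSD matrices is nonnegative. -/
lemma psd_mul_trace_nonneg {B : Matrix ι ι ℂ} (hA : A.PosSemidef) (hB : B.PosSemidef) :
    0 ≤ (A * B).trace := by
  have hS := psqrt_posSemidef hA
  have h1 : A * B = psqrt A * (psqrt A * B) := by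
    rw [← Matrix.mul_assoc, psqrt_mul_self hA]
  have h2 : (A * B).trace = (psqrt A * B * psqrt A).trace := by
    rw [h1, Matrix.trace_mul_comm]
  rw [h2]
  refine psd_trace_nonneg ?_
  have := hB.mul_mul_conjTranspose_same (psqrt A)
  rwa [hS.1.eq] at this

lemma psd_mul_trace_re_nonneg {B : Matrix ι ι ℂ} (hA : A.PosSemidef) (hB : B.PosSemidef) :
    0 ≤ (A * B).trace.re :=
  (Complex.nonneg_iff.mp (psd_mul_trace_nonneg hA hB)).1

/-- scaling a PSD matrix by a nonnegative real. -/
lemma psd_smul {c : ℝ} (hc : 0 ≤ c) (hA : A.PosSemidef) : ((c : ℂ) • A).PosSemidef := by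
  refine Matrix.PosSemidef.of_dotProduct_mulVec_nonneg ?_ ?_
  · rw [Matrix.IsHermitian, Matrix.conjTranspose_smul, hA.1.eq]
    simp [Complex.conj_ofReal]
  · intro x
    rw [Matrix.smul_mulVec, dotProduct_smul]
    exact smul_nonneg (Complex.zero_le_real.mpr hc) (hA.dotProduct_mulVec_nonneg x)

lemma loewner_trans {B C : Matrix ι ι ℂ} (h1 : Loewner A B) (h2 : Loewner B C) :
    Loewner A C := by
  have := h1.add h2
  simpa [Loewner, sub_add_sub_cancel'] using this

lemma smul_hfun_sub_hfun (h : A.IsHermitian) (c : ℝ) (f g : ℝ → ℝ) :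
    (c : ℂ) • hfun f A - hfun g A = hfun (fun x => c * f x - g x) A := by
  rw [hfun_smul h, hfun_sub h]

/-- A PSD matrix is dominated by its trace times the identity. -/
lemma psd_le_trace_smul_one (hA : A.PosSemidef) :
    Loewner A ((A.trace.re : ℂ) • 1) := by
  have htr : ∀ i, hA.1.eigenvalues i ≤ A.trace.re := by
    intro i
    have h1 : A.trace = ∑ j, ((hA.1.eigenvalues j : ℝ) : ℂ) := by
      rw [← hfun_trace hA.1 (fun x => x), hfun_id hA.1]
    have h2 : A.trace.re = ∑ j, hA.1.eigenvalues j := by rw [h1]; push_cast; simp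
    rw [h2]
    exact Finset.single_le_sum (fun j _ => hA.eigenvalues_nonneg j) (Finset.mem_univ i)
  have key := smul_hfun_sub_hfun hA.1 A.trace.re (fun _ => 1) (fun x => x)
  rw [hfun_one hA.1, hfun_id hA.1] at key
  rw [Loewner, key]
  exact hfun_posSemidef hA.1 _ fun i => by
    simpa using sub_nonneg.mpr (htr i)

end PsqrtCalc
section SuppCalc
open Matrix
variable {ι : Type*} [Fintype ι] [DecidableEq ι] {A B : Matrix ι ι ℂ}

lemma suppProj_posSemidef (hA : A.IsHermitian) : (suppProj A).PosSemidef := by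
  refine hfun_posSemidef hA _ fun i => ?_
  split <;> norm_num

lemma suppProj_isHermitian (hA : A.IsHermitian) : (suppProj A).IsHermitian :=
  hfun_isHermitian hA _

lemma suppProj_mul_self (hA : A.IsHermitian) : suppProj A * A = A := by
  have key := hfun_mul hA (fun x => if x = 0 then (0:ℝ) else 1) (fun x => x)
  rw [hfun_id hA] at key
  rw [suppProj, key]
  have h2 : hfun (fun x => (if x = 0 then (0:ℝ) else 1) * x) A = hfun (fun x => x) A :=
    hfun_congr hA fun i => by rcases eq_or_ne (hA.eigenvalues i) 0 with h | h <;> simp [h]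
  rw [h2, hfun_id hA]

lemma suppProj_mul_psqrt (hA : A.PosSemidef) : suppProj A * psqrt A = psqrt A := by
  rw [suppProj, psqrt_eq_hfun hA, hfun_mul hA.1]
  refine hfun_congr hA.1 fun i => ?_
  rcases eq_or_ne (hA.1.eigenvalues i) 0 with h | h <;> simp [h]

lemma suppProj_idem (hA : A.IsHermitian) : suppProj A * suppProj A = suppProj A := by
  rw [suppProj, hfun_mul hA]
  refine hfun_congr hA fun i => ?_
  split <;> norm_num

lemma one_sub_suppProj (hA : A.IsHermitian) : (1 - suppProj A).PosSemidef := by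
  have key := smul_hfun_sub_hfun hA 1 (fun _ => 1) (fun x => if x = 0 then (0:ℝ) else 1)
  rw [hfun_one hA, Complex.ofReal_one, one_smul] at key
  rw [show (1 : Matrix ι ι ℂ) - suppProj A = hfun
      (fun x => 1 * 1 - if x = 0 then (0:ℝ) else 1) A from key]
  refine hfun_posSemidef hA _ fun i => ?_
  split <;> norm_num

lemma mat_eq_of_mulVec (M N : Matrix ι ι ℂ) (h : ∀ v, M *ᵥ v = N *ᵥ v) : M = N := by
  ext i j
  have := congrFun (h (Pi.single j 1)) i
  simpa [Matrix.mulVec_single] using this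

/-- Support domination: if supp A ⊆ supp B for PSD matrices, then A ≤ c B for some c > 0. -/
lemma suppIn_dominates (hA : A.PosSemidef) (hB : B.PosSemidef) (hs : SuppIn A B) :
    ∃ c : ℝ, 0 < c ∧ Loewner A ((c : ℂ) • B) := by
  set P := suppProj B with hPdef
  have hPherm : P.IsHermitian := suppProj_isHermitian hB.1
  have hPB : P * B = B := suppProj_mul_self hB.1
  have hPP : P * P = P := suppProj_idem hB.1
  -- P acts as identity on range of B, hence on range of A
  have hPA : P * A = A := by
    refine mat_eq_of_mulVec _ _ fun v => ?_
    have hmem : A *ᵥ v ∈ LinearMap.range B.mulVecLin := hs ⟨v, rfl⟩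
    obtain ⟨w, hw⟩ := hmem
    rw [Matrix.mulVecLin_apply] at hw
    rw [← Matrix.mulVec_mulVec, ← hw, Matrix.mulVec_mulVec, hPB]
  have hAP : A * P = A := by
    have := congrArg Matrix.conjTranspose hPA
    rwa [Matrix.conjTranspose_mul, hA.1.eq, hPherm.eq] at this
  -- first bound : A ≤ c1 • P
  set c1 := A.trace.re with hc1
  have hc1nn : 0 ≤ c1 := psd_trace_re_nonneg hA
  have h1 : Loewner A ((c1 : ℂ) • P) := by
    have h0 := psd_le_trace_smul_one hA
    have hconj := (h0 : ((c1 : ℂ) • 1 - A).PosSemidef).mul_mul_conjTranspose_same P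
    rw [hPherm.eq] at hconj
    have hexp : P * ((c1 : ℂ) • 1 - A) * P = (c1 : ℂ) • P - A := by
      rw [Matrix.mul_sub, Matrix.sub_mul, Matrix.mul_smul, Matrix.mul_one,
        Matrix.smul_mul, hPP, hPA, hAP]
    rw [Loewner, ← hexp]
    exact hconj
  -- second bound : P ≤ c2 • B
  set g : ℝ → ℝ := fun x => if x ≤ 0 then 0 else x⁻¹ with hg
  set c2 := ∑ i, g (hB.1.eigenvalues i) with hc2
  have hgn : ∀ x, 0 ≤ g x := fun x => by
    rw [hg]; dsimp only; split
    · exact le_rfl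
    · next h => exact inv_nonneg.mpr (le_of_lt (not_le.mp h))
  have hc2nn : 0 ≤ c2 := Finset.sum_nonneg fun i _ => hgn _
  have h2 : Loewner P ((c2 : ℂ) • B) := by
    have key := smul_hfun_sub_hfun hB.1 c2 (fun x => x) (fun x => if x = 0 then (0:ℝ) else 1)
    rw [hfun_id hB.1] at key
    rw [show hfun (fun x => if x = 0 then (0:ℝ) else 1) B = P from rfl] at key
    rw [Loewner, key]
    refine hfun_posSemidef hB.1 _ fun i => ?_
    rcases eq_or_ne (hB.1.eigenvalues i) 0 with h | h
    · simp [h]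
    · have hpos : 0 < hB.1.eigenvalues i := lt_of_le_of_ne (hB.eigenvalues_nonneg i) (Ne.symm h)
      have hge : g (hB.1.eigenvalues i) ≤ c2 :=
        Finset.single_le_sum (fun j _ => hgn _) (Finset.mem_univ i)
      rw [hg] at hge
      simp only [not_le.mpr hpos, if_neg (not_le.mpr hpos)] at hge
      simp only [if_neg h]
      have : (hB.1.eigenvalues i)⁻¹ * hB.1.eigenvalues i ≤ c2 * hB.1.eigenvalues i :=
        mul_le_mul_of_nonneg_right hge (le_of_lt hpos)
      rw [inv_mul_cancel₀ (ne_of_gt hpos)] at this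
      linarith
  -- combine
  refine ⟨c1 * c2 + 1, by positivity, ?_⟩
  have hstep1 : Loewner A ((c1 * c2 : ℂ) • B) := by
    have hsm : (((c1 : ℂ)) • ((c2 : ℂ) • B - P)).PosSemidef := by
      have := psd_smul hc1nn (h2 : ((c2:ℂ) • B - P).PosSemidef)
      exact this
    have hexp : ((c1:ℂ)) • ((c2:ℂ) • B - P) = (c1 * c2 : ℂ) • B - (c1:ℂ) • P := by
      rw [smul_sub, smul_smul]
    rw [hexp] at hsm
    have := h1.add hsm
    rw [Loewner]
    convert this using 1
    abel
  have hexp2 : ((c1 * c2 + 1 : ℝ) : ℂ) • B - A = ((c1 * c2 : ℂ) • B - A) + B := by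
    push_cast
    rw [add_smul, one_smul]
    abel
  rw [Loewner, hexp2]
  exact hstep1.add hB

end SuppCalc
section KronProj
open Matrix Kronecker

lemma kron_conjTranspose {a b : Type*} [Fintype a] [Fintype b]
    (M : Matrix a a ℂ) (N : Matrix b b ℂ) : (M ⊗ₖ N)ᴴ = Mᴴ ⊗ₖ Nᴴ := by
  ext p q
  simp [Matrix.conjTranspose_apply, Matrix.kroneckerMap_apply]

lemma kron_posSemidef {a b : Type*} [Fintype a] [DecidableEq a] [Fintype b] [DecidableEq b]
    {M : Matrix a a ℂ} {N : Matrix b b ℂ} (hM : M.PosSemidef) (hN : N.PosSemidef) :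
    (M ⊗ₖ N).PosSemidef := by
  have key : M ⊗ₖ N = (psqrt M ⊗ₖ psqrt N)ᴴ * (psqrt M ⊗ₖ psqrt N) := by
    rw [kron_conjTranspose, (psqrt_posSemidef hM).1.eq, (psqrt_posSemidef hN).1.eq,
      ← Matrix.mul_kronecker_mul, psqrt_mul_self hM, psqrt_mul_self hN]
  rw [key]
  exact Matrix.posSemidef_conjTranspose_mul_self _

lemma pDist_self_eq_zero {ι : Type*} [Fintype ι] [DecidableEq ι] {X : Matrix ι ι ℂ}
    (hX : X.PosSemidef) (htr : X.trace = 1) : pDist X X = 0 := by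
  have hre : X.trace.re = 1 := by rw [htr, Complex.one_re]
  have h1 : gFid X X = 1 := by
    rw [gFid, traceNorm, psqrt_mul_self hX, hX.1.eq, psqrt_mul_self' hX, hre]
    norm_num
  rw [pDist, h1]
  norm_num

/-- The witness channel `ω ↦ tr(Q ω) • ρ`. -/
noncomputable def projTraceMap {ι κ : Type*} [Fintype ι] [Fintype κ]
    (Q : Matrix ι ι ℂ) (ρ : Matrix κ κ ℂ) : Matrix ι ι ℂ →ₗ[ℂ] Matrix κ κ ℂ where
  toFun ω := (Q * ω).trace • ρ
  map_add' x y := by rw [Matrix.mul_add, Matrix.trace_add, add_smul]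
  map_smul' c x := by
    rw [Matrix.mul_smul, Matrix.trace_smul, smul_eq_mul, mul_smul]; rfl

@[simp] lemma projTraceMap_apply {ι κ : Type*} [Fintype ι] [Fintype κ]
    (Q : Matrix ι ι ℂ) (ρ : Matrix κ κ ℂ) (ω : Matrix ι ι ℂ) :
    projTraceMap Q ρ ω = (Q * ω).trace • ρ := rfl

lemma trace_mul_stdBasis {ι : Type*} [Fintype ι] [DecidableEq ι]
    (Q : Matrix ι ι ℂ) (i j : ι) :
    (Q * Matrix.single i j 1).trace = Q j i := by
  classical
  rw [Matrix.trace_mul_comm, Matrix.trace]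
  rw [Finset.sum_eq_single i (fun b _ hb => by simp [Matrix.diag_apply, hb]) (by simp)]
  simp [Matrix.diag_apply]

lemma choi_projTraceMap {ι κ : Type*} [Fintype ι] [DecidableEq ι] [Fintype κ]
    (Q : Matrix ι ι ℂ) (ρ : Matrix κ κ ℂ) :
    choi (projTraceMap Q ρ) = ρ ⊗ₖ Qᵀ := by
  ext ⟨p1, p2⟩ ⟨q1, q2⟩
  simp only [choi, Matrix.of_apply, projTraceMap_apply, Matrix.smul_apply,
    Matrix.kroneckerMap_apply, Matrix.transpose_apply, trace_mul_stdBasis, smul_eq_mul]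
  ring

end KronProj
section CPTrace
open Matrix Kronecker

lemma loewner_trace_re_le {ι : Type*} [Fintype ι] {A B : Matrix ι ι ℂ} (h : Loewner A B) :
    A.trace.re ≤ B.trace.re := by
  have h2 : (0 : ℝ) ≤ (B - A).trace.re :=
    (Complex.nonneg_iff.mp (psd_trace_nonneg (h : (B - A).PosSemidef))).1
  rw [Matrix.trace_sub, Complex.sub_re] at h2
  linarith

lemma tensorIdApply_trace {ι κ r : Type*} [Fintype ι] [Fintype κ] [Fintype r]
    (Φ : Matrix ι ι ℂ →ₗ[ℂ] Matrix κ κ ℂ) (M : Matrix (ι × r) (ι × r) ℂ) :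
    (tensorIdApply Φ M).trace = (Φ (ptraceRight M)).trace := by
  have h1 : ptraceRight M = ∑ s : r, Matrix.of (fun a b => M (a, s) (b, s)) := by
    ext i j
    simp [ptraceRight, Matrix.sum_apply]
  calc (tensorIdApply Φ M).trace
      = ∑ x : κ, ∑ s : r, (Φ (Matrix.of fun a b => M (a, s) (b, s))) x x := by
        rw [Matrix.trace]; rw [Fintype.sum_prod_type]; rfl
    _ = ∑ s : r, ∑ x : κ, (Φ (Matrix.of fun a b => M (a, s) (b, s))) x x := by
        rw [Finset.sum_comm]
    _ = ∑ s : r, (Φ (Matrix.of fun a b => M (a, s) (b, s))).trace := rfl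
    _ = (Φ (ptraceRight M)).trace := by rw [h1, map_sum, Matrix.trace_sum]

lemma cp_trace_formula {ι κ : Type*} [Fintype ι] [DecidableEq ι] [Fintype κ] [DecidableEq κ]
    (Φ : Matrix ι ι ℂ →ₗ[ℂ] Matrix κ κ ℂ) (ω : Matrix ι ι ℂ) :
    (Φ ω).trace = (choi Φ * ((1 : Matrix κ κ ℂ) ⊗ₖ ωᵀ)).trace := by
  have hdecomp : ω = ∑ i : ι, ∑ j : ι, (ω i j) • Matrix.single i j (1 : ℂ) := by
    conv_lhs => rw [Matrix.matrix_eq_sum_single ω]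
    refine Finset.sum_congr rfl fun i _ => Finset.sum_congr rfl fun j _ => ?_
    rw [Matrix.smul_single, smul_eq_mul, mul_one]
  calc (Φ ω).trace
      = ∑ i : ι, ∑ j : ι, ω i j * (Φ (Matrix.single i j 1)).trace := by
        conv_lhs => rw [hdecomp]
        rw [map_sum, Matrix.trace_sum]
        refine Finset.sum_congr rfl fun i _ => ?_
        rw [map_sum, Matrix.trace_sum]
        refine Finset.sum_congr rfl fun j _ => ?_
        rw [_root_.map_smul, Matrix.trace_smul, smul_eq_mul]
    _ = ∑ i : ι, ∑ j : ι, ω i j * ∑ x : κ, choi Φ (x, i) (x, j) := by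
        refine Finset.sum_congr rfl fun i _ => Finset.sum_congr rfl fun j _ => ?_
        rfl
    _ = (choi Φ * ((1 : Matrix κ κ ℂ) ⊗ₖ ωᵀ)).trace := by
        have hterm : ∀ (x : κ) (i : ι),
            (choi Φ * ((1 : Matrix κ κ ℂ) ⊗ₖ ωᵀ)) (x, i) (x, i)
              = ∑ j : ι, choi Φ (x, i) (x, j) * ω i j := by
          intro x i
          rw [Matrix.mul_apply, Fintype.sum_prod_type]
          rw [Finset.sum_eq_single x]
          · refine Finset.sum_congr rfl fun j _ => ?_
            simp [Matrix.kroneckerMap_apply, Matrix.one_apply_eq, Matrix.transpose_apply]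
          · intro y _ hy
            simp [Matrix.kroneckerMap_apply, Matrix.one_apply_ne hy]
          · intro h
            exact absurd (Finset.mem_univ x) h
        have hL : (choi Φ * ((1 : Matrix κ κ ℂ) ⊗ₖ ωᵀ)).trace
            = ∑ x : κ, ∑ i : ι, ∑ j : ι, choi Φ (x, i) (x, j) * ω i j := by
          rw [Matrix.trace, Fintype.sum_prod_type]
          exact Finset.sum_congr rfl fun x _ => Finset.sum_congr rfl fun i _ => hterm x i
        rw [hL]
        conv_rhs => rw [Finset.sum_comm]
        refine Finset.sum_congr rfl fun i _ => ?_
        conv_rhs => rw [Finset.sum_comm]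
        refine Finset.sum_congr rfl fun j _ => ?_
        rw [Finset.mul_sum]
        refine Finset.sum_congr rfl fun x _ => mul_comm _ _
  
lemma cp_trace_nonneg {ι κ : Type*} [Fintype ι] [DecidableEq ι] [Fintype κ] [DecidableEq κ]
    {Φ : Matrix ι ι ℂ →ₗ[ℂ] Matrix κ κ ℂ} (hΦ : IsCP Φ) {ω : Matrix ι ι ℂ}
    (hω : ω.PosSemidef) : 0 ≤ (Φ ω).trace.re := by
  rw [cp_trace_formula]
  exact psd_mul_trace_re_nonneg hΦ (kron_posSemidef Matrix.PosSemidef.one hω.transpose)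

lemma traceNorm_sq_le {ι : Type*} [Fintype ι] [DecidableEq ι] {τ R : Matrix ι ι ℂ}
    (hτ : τ.PosSemidef) (hR : R.PosSemidef) (hR1 : Loewner R 1) :
    traceNorm (psqrt τ * psqrt R) ^ 2 ≤ (Fintype.card ι : ℝ) * τ.trace.re := by
  set M := psqrt τ * psqrt R with hM
  have hsτ := psqrt_posSemidef hτ
  have hsR := psqrt_posSemidef hR
  have hX : Mᴴ * M = psqrt R * τ * psqrt R := by
    rw [hM, Matrix.conjTranspose_mul, hsτ.1.eq, hsR.1.eq, Matrix.mul_assoc,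
      ← Matrix.mul_assoc (psqrt τ) (psqrt τ) (psqrt R), psqrt_mul_self hτ, ← Matrix.mul_assoc]
  have hXpsd : (Mᴴ * M).PosSemidef := Matrix.posSemidef_conjTranspose_mul_self M
  -- trace norm as sum of square roots of eigenvalues
  have htn : traceNorm M = ∑ i, Real.sqrt (hXpsd.1.eigenvalues i) := by
    rw [traceNorm, psqrt_eq_hfun hXpsd, hfun_trace hXpsd.1]
    push_cast
    simp
  have hXtr : (Mᴴ * M).trace.re = ∑ i, hXpsd.1.eigenvalues i := by
    have h1 : (Mᴴ * M).trace = ∑ j, ((hXpsd.1.eigenvalues j : ℝ) : ℂ) := by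
      rw [← hfun_trace hXpsd.1 (fun x => x), hfun_id hXpsd.1]
    rw [h1]; push_cast; simp
  -- Cauchy-Schwarz
  have hcs : (∑ i, Real.sqrt (hXpsd.1.eigenvalues i)) ^ 2
      ≤ (Fintype.card ι : ℝ) * ∑ i, hXpsd.1.eigenvalues i := by
    have := Finset.sum_mul_sq_le_sq_mul_sq Finset.univ (fun _ : ι => (1 : ℝ))
      (fun i => Real.sqrt (hXpsd.1.eigenvalues i))
    simp only [one_mul, one_pow] at this
    calc (∑ i, Real.sqrt (hXpsd.1.eigenvalues i)) ^ 2
        ≤ (∑ _i : ι, (1:ℝ)) * ∑ i, Real.sqrt (hXpsd.1.eigenvalues i) ^ 2 := this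
      _ = (Fintype.card ι : ℝ) * ∑ i, hXpsd.1.eigenvalues i := by
          congr 1
          · simp
          · refine Finset.sum_congr rfl fun i _ => Real.sq_sqrt (hXpsd.eigenvalues_nonneg i)
  -- trace bound
  have htr2 : (Mᴴ * M).trace.re ≤ τ.trace.re := by
    have he : (Mᴴ * M).trace = (τ * R).trace := by
      rw [hX, Matrix.trace_mul_cycle, psqrt_mul_self hR, Matrix.trace_mul_comm]
    have hp : 0 ≤ (τ * (1 - R)).trace.re :=
      psd_mul_trace_re_nonneg hτ (hR1 : (1 - R).PosSemidef)
    have he2 : (τ * (1 - R)).trace = τ.trace - (τ * R).trace := by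
      rw [Matrix.mul_sub, Matrix.trace_sub, Matrix.mul_one]
    rw [he2, Complex.sub_re] at hp
    rw [he]
    linarith
  rw [htn]
  calc (∑ i, Real.sqrt (hXpsd.1.eigenvalues i)) ^ 2
      ≤ (Fintype.card ι : ℝ) * ∑ i, hXpsd.1.eigenvalues i := hcs
    _ = (Fintype.card ι : ℝ) * (Mᴴ * M).trace.re := by rw [hXtr]
    _ ≤ (Fintype.card ι : ℝ) * τ.trace.re := by
        have : (0:ℝ) ≤ (Fintype.card ι : ℝ) := by positivity
        nlinarith

end CPTrace
section Fidelity
open Matrix Kronecker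

lemma traceNorm_nonneg {n : Type*} [Fintype n] [DecidableEq n] (M : Matrix n n ℂ) :
    0 ≤ traceNorm M :=
  psd_trace_re_nonneg (psqrt_posSemidef (Matrix.posSemidef_conjTranspose_mul_self M))

lemma traceNorm_zero {n : Type*} [Fintype n] [DecidableEq n] :
    traceNorm (0 : Matrix n n ℂ) = 0 := by
  rw [traceNorm, Matrix.conjTranspose_zero, Matrix.mul_zero, psqrt_zero]
  simp

lemma trace_proj_outer {ι : Type*} [Fintype ι] [DecidableEq ι] (P W : Matrix ι ι ℂ)
    (hPW : P * W = W) (p2 q2 : ι) :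
    (P * Matrix.of (fun a b => W a p2 * W q2 b)).trace = (W * W) q2 p2 := by
  unfold Matrix.trace Matrix.diag
  simp only [Matrix.mul_apply, Matrix.of_apply]
  calc ∑ a, ∑ b, P a b * (W b p2 * W q2 a)
      = ∑ a, W q2 a * ∑ b, P a b * W b p2 := by
        refine Finset.sum_congr rfl fun a _ => ?_
        rw [Finset.mul_sum]
        exact Finset.sum_congr rfl fun b _ => by ring
    _ = ∑ a, W q2 a * (P * W) a p2 := by
        refine Finset.sum_congr rfl fun a _ => ?_
        rw [Matrix.mul_apply]
    _ = ∑ a, W q2 a * W a p2 := by rw [hPW]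
    _ = (W * W) q2 p2 := (Matrix.mul_apply).symm

lemma one_le_card_mul_trace {n : Type*} [Fintype n] [DecidableEq n]
    {τ R : Matrix n n ℂ} (hR : R.PosSemidef) (hRtr : R.trace = 1)
    (hpd : pDist τ R ≤ 0) : (1 : ℝ) ≤ (Fintype.card n : ℝ) * τ.trace.re := by
  have hg0 : 0 ≤ gFid τ R := add_nonneg (traceNorm_nonneg _) (Real.sqrt_nonneg _)
  rw [pDist] at hpd
  have hs : Real.sqrt (1 - gFid τ R ^ 2) = 0 := le_antisymm hpd (Real.sqrt_nonneg _)
  have hle := Real.sqrt_eq_zero'.mp hs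
  have h1 : 1 ≤ gFid τ R := by nlinarith
  have hRre : R.trace.re = 1 := by rw [hRtr, Complex.one_re]
  have hgf : gFid τ R = traceNorm (psqrt τ * psqrt R) := by
    rw [gFid, hRre]
    norm_num
  rw [hgf] at h1
  by_cases hτ : τ.PosSemidef
  · have hR1 : Loewner R 1 := by
      have := psd_le_trace_smul_one hR
      rwa [hRre, Complex.ofReal_one, one_smul] at this
    have hsq := traceNorm_sq_le hτ hR hR1
    nlinarith [traceNorm_nonneg (psqrt τ * psqrt R)]
  · exfalso
    rw [psqrt, dif_neg hτ, Matrix.zero_mul, traceNorm_zero] at h1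
    linarith

end Fidelity
/-- Coherent relative entropy for product process matrices. -/
theorem coh_rel_entr_product_states {dX dX' : ℕ}
    (ΓX : Matrix (Fin dX) (Fin dX) ℂ) (ΓX' : Matrix (Fin dX') (Fin dX') ℂ)
    (hΓX : ΓX.PosSemidef) (hΓX' : ΓX'.PosSemidef)
    (σX : Matrix (Fin dX) (Fin dX) ℂ)
    (hσ : σX.PosSemidef) (hσtr : σX.trace = 1) (hσsupp : SuppIn σX ΓX)
    (ρX' : Matrix (Fin dX') (Fin dX') ℂ)
    (hρ : ρX'.PosSemidef) (hρtr : ρX'.trace = 1) (hρsupp : SuppIn ρX' ΓX') :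
    Dmin σX ΓX - Dmax ρX' ΓX' ≤ DCoh 0 (ρX' ⊗ₖ σXᵀ) ΓX ΓX' := by
  classical
  obtain ⟨cσ, hcσpos, hcσ⟩ := suppIn_dominates hσ hΓX hσsupp
  obtain ⟨cρ, hcρpos, hcρ⟩ := suppIn_dominates hρ hΓX' hρsupp
  have hProjPsd : (suppProj σX).PosSemidef := suppProj_posSemidef hσ.1
  -- t = tr(Π Γ) is a positive real
  set t : ℝ := (suppProj σX * ΓX).trace.re with ht_def
  have hPGPpsd : (suppProj σX * ΓX * suppProj σX).PosSemidef := by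
    have := hΓX.mul_mul_conjTranspose_same (suppProj σX)
    rwa [hProjPsd.1.eq] at this
  have htcyc : (suppProj σX * ΓX * suppProj σX).trace = (suppProj σX * ΓX).trace := by
    rw [Matrix.trace_mul_cycle, suppProj_idem hσ.1]
  have ht_eq : (suppProj σX * ΓX).trace = (t : ℂ) := by
    rw [ht_def, ← htcyc]
    exact psd_trace_eq_re hPGPpsd
  have hPσ : suppProj σX * σX = σX := suppProj_mul_self hσ.1
  have htpos : 0 < t := by
    have hkey : 0 ≤ ((suppProj σX) * ((cσ : ℂ) • ΓX - σX)).trace.re :=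
      psd_mul_trace_re_nonneg hProjPsd hcσ
    have hexp : ((suppProj σX) * ((cσ : ℂ) • ΓX - σX)).trace = (cσ : ℂ) * (t : ℂ) - 1 := by
      rw [Matrix.mul_sub, Matrix.trace_sub, Matrix.mul_smul, Matrix.trace_smul, hPσ, hσtr,
        ht_eq, smul_eq_mul]
    rw [hexp, ← Complex.ofReal_mul] at hkey
    have : (0:ℝ) ≤ cσ * t - 1 := by
      have h2 := hkey
      rwa [Complex.sub_re, Complex.ofReal_re, Complex.one_re] at h2
    nlinarith
  -- m = sInf of the Dmax set is a positive real, attained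
  set Mset : Set ℝ := {μ : ℝ | 0 ≤ μ ∧ Loewner ρX' ((μ : ℂ) • ΓX')} with hMset_def
  set m : ℝ := sInf Mset with hm_def
  have hMne : Mset.Nonempty := ⟨cρ, le_of_lt hcρpos, hcρ⟩
  have hMbdd : BddBelow Mset := ⟨0, fun μ hμ => hμ.1⟩
  have hMclosed : IsClosed Mset := by
    have heq : Mset = Set.Ici (0:ℝ) ∩ ⋂ v : Fin dX' → ℂ,
        {μ : ℝ | 0 ≤ dotProduct (star v) ((((μ:ℂ) • ΓX' - ρX') *ᵥ v))} := by
      ext μ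
      constructor
      · rintro ⟨h0, hL⟩
        exact ⟨h0, Set.mem_iInter.2 fun v => hL.dotProduct_mulVec_nonneg v⟩
      · rintro ⟨h0, hv⟩
        refine ⟨h0, Matrix.PosSemidef.of_dotProduct_mulVec_nonneg ?_ fun v => Set.mem_iInter.1 hv v⟩
        have h1 : ((μ:ℂ) • ΓX').IsHermitian := by
          rw [Matrix.IsHermitian, Matrix.conjTranspose_smul, hΓX'.1.eq]
          simp [Complex.conj_ofReal]
        exact h1.sub hρ.1
    rw [heq]
    refine isClosed_Ici.inter (isClosed_iInter fun v => ?_)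
    have hcont : Continuous fun μ : ℝ =>
        dotProduct (star v) (((μ:ℂ) • ΓX' - ρX') *ᵥ v) := by
      have hrw : (fun μ : ℝ => dotProduct (star v) (((μ:ℂ) • ΓX' - ρX') *ᵥ v))
          = fun μ : ℝ => (μ:ℂ) * dotProduct (star v) (ΓX' *ᵥ v)
              - dotProduct (star v) (ρX' *ᵥ v) := by
        funext μ
        rw [Matrix.sub_mulVec, dotProduct_sub, Matrix.smul_mulVec,
          dotProduct_smul, smul_eq_mul]
      rw [hrw]
      exact (Complex.continuous_ofReal.mul continuous_const).sub continuous_const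
    have hcl : IsClosed {z : ℂ | 0 ≤ z} := by
      have hset : {z : ℂ | 0 ≤ z} = Complex.re ⁻¹' Set.Ici 0 ∩ Complex.im ⁻¹' {0} := by
        ext z
        simp only [Set.mem_setOf_eq, Set.mem_inter_iff, Set.mem_preimage, Set.mem_Ici,
          Set.mem_singleton_iff, Complex.nonneg_iff]
        exact and_congr Iff.rfl eq_comm
      rw [hset]
      exact (isClosed_Ici.preimage Complex.continuous_re).inter
        (isClosed_singleton.preimage Complex.continuous_im)
    exact hcl.preimage hcont
  have hm_mem : m ∈ Mset := hMclosed.csInf_mem hMne hMbdd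
  have htrbound : ∀ μ ∈ Mset, 1 ≤ μ * ΓX'.trace.re := by
    intro μ hμ
    have h1 := loewner_trace_re_le hμ.2
    rw [Matrix.trace_smul, smul_eq_mul, Complex.re_ofReal_mul, hρtr, Complex.one_re] at h1
    exact h1
  have hGtrpos : 0 < ΓX'.trace.re := by
    have h1 := htrbound cρ ⟨le_of_lt hcρpos, hcρ⟩
    nlinarith
  have hmpos : 0 < m := by
    have hle : 1 / ΓX'.trace.re ≤ m := by
      refine le_csInf hMne fun μ hμ => ?_
      have := htrbound μ hμ
      rw [div_le_iff₀ hGtrpos]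
      linarith
    have : (0:ℝ) < 1 / ΓX'.trace.re := by positivity
    linarith
  -- the goal in terms of t and m
  have hgoal_eq : Dmin σX ΓX - Dmax ρX' ΓX' = -Real.logb 2 t - Real.logb 2 m := by
    rw [Dmin, Dmax]
  set y₀ : ℝ := Dmin σX ΓX - Dmax ρX' ΓX' with hy₀
  have hpow : ((2:ℝ) ^ (-y₀) : ℝ) = t * m := by
    have hy : -y₀ = Real.logb 2 (t * m) := by
      rw [hgoal_eq, Real.logb_mul (ne_of_gt htpos) (ne_of_gt hmpos)]
      ring
    rw [hy]
    exact Real.rpow_logb (by norm_num) (by norm_num) (by positivity)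
  -- the big state
  have hbig_psd : (ρX' ⊗ₖ σXᵀ).PosSemidef := kron_posSemidef hρ hσ.transpose
  have hbig_tr : (ρX' ⊗ₖ σXᵀ).trace = 1 := by
    rw [Matrix.trace_kronecker, hρtr, Matrix.trace_transpose, hσtr, one_mul]
  have hptl : ptraceLeft (ρX' ⊗ₖ σXᵀ) = σXᵀ := by
    ext i j
    simp only [ptraceLeft, Matrix.of_apply, Matrix.kroneckerMap_apply]
    rw [← Finset.sum_mul]
    rw [show (∑ k, ρX' k k) = ρX'.trace from rfl, hρtr, one_mul]
  -- the purification slices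
  have hslice : ∀ p2 q2 : Fin dX, (Matrix.of fun a b =>
        inputPurif (ρX' ⊗ₖ σXᵀ) (a, p2) (b, q2))
      = Matrix.of (fun a b => (psqrt σX) a p2 * (psqrt σX) q2 b) := by
    intro p2 q2
    ext a b
    simp only [Matrix.of_apply, inputPurif, hptl, psqrt_transpose hσ, Matrix.transpose_apply]
  have hptr : ptraceRight (inputPurif (ρX' ⊗ₖ σXᵀ)) = σX := by
    ext i j
    simp only [ptraceRight, Matrix.of_apply, inputPurif, hptl, psqrt_transpose hσ,
      Matrix.transpose_apply]
    rw [show (∑ k, psqrt σX i k * psqrt σX k j) = (psqrt σX * psqrt σX) i j from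
      (Matrix.mul_apply).symm, psqrt_mul_self hσ]
  -- membership of y₀ in the DCoh set
  have hmem : y₀ ∈ { y : ℝ | ∃ T : Matrix (Fin dX) (Fin dX) ℂ →ₗ[ℂ] Matrix (Fin dX') (Fin dX') ℂ,
      IsCP T ∧ TNI T ∧ Loewner (T ΓX) ((((2 : ℝ) ^ (-y) : ℝ) : ℂ) • ΓX') ∧
      pDist (tensorIdApply T (inputPurif (ρX' ⊗ₖ σXᵀ))) (ρX' ⊗ₖ σXᵀ) ≤ 0 } := by
    refine ⟨projTraceMap (suppProj σX) ρX', ?_, ?_, ?_, ?_⟩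
    · rw [IsCP, choi_projTraceMap]
      exact kron_posSemidef hρ hProjPsd.transpose
    · intro ω hω
      rw [projTraceMap_apply, Matrix.trace_smul, hρtr, smul_eq_mul, mul_one]
      have h1 : 0 ≤ ((1 - suppProj σX) * ω).trace.re :=
        psd_mul_trace_re_nonneg (one_sub_suppProj hσ.1) hω
      have h2 : ((1 - suppProj σX) * ω).trace = ω.trace - (suppProj σX * ω).trace := by
        rw [Matrix.sub_mul, Matrix.trace_sub, Matrix.one_mul]
      rw [h2, Complex.sub_re] at h1
      linarith
    · rw [Loewner, projTraceMap_apply, ht_eq, hpow]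
      have hsm := psd_smul (le_of_lt htpos) (hm_mem.2 : ((m:ℂ) • ΓX' - ρX').PosSemidef)
      have he : (t : ℂ) • ((m:ℂ) • ΓX' - ρX') = (((t * m : ℝ)) : ℂ) • ΓX' - (t : ℂ) • ρX' := by
        rw [smul_sub, smul_smul, ← Complex.ofReal_mul]
      rwa [he] at hsm
    · have hmain : tensorIdApply (projTraceMap (suppProj σX) ρX')
          (inputPurif (ρX' ⊗ₖ σXᵀ)) = ρX' ⊗ₖ σXᵀ := by
        ext ⟨p1, p2⟩ ⟨q1, q2⟩
        simp only [tensorIdApply, Matrix.of_apply]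
        rw [hslice p2 q2, projTraceMap_apply,
          trace_proj_outer _ _ (suppProj_mul_psqrt hσ) p2 q2, psqrt_mul_self hσ]
        simp only [Matrix.smul_apply, Matrix.kroneckerMap_apply, Matrix.transpose_apply,
          smul_eq_mul]
        ring
      rw [hmain, pDist_self_eq_zero hbig_psd hbig_tr]
  -- boundedness of the DCoh set
  have hdX : 0 < dX := by
    rcases Nat.eq_zero_or_pos dX with h | h
    · exfalso
      subst h
      simp [Matrix.trace] at hσtr
    · exact h
  have hdX' : 0 < dX' := by
    rcases Nat.eq_zero_or_pos dX' with h | h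
    · exfalso
      subst h
      simp [Matrix.trace] at hρtr
    · exact h
  have hcard : (Fintype.card (Fin dX' × Fin dX) : ℝ) = (dX' * dX : ℝ) := by
    simp [Fintype.card_prod]
  set K : ℝ := (dX' * dX : ℝ) * (cσ * ΓX'.trace.re) with hK_def
  have hKpos : 0 < K := by
    have h1 : (0:ℝ) < (dX' * dX : ℝ) := by positivity
    positivity
  have hBdd : BddAbove { y : ℝ | ∃ T : Matrix (Fin dX) (Fin dX) ℂ →ₗ[ℂ]
      Matrix (Fin dX') (Fin dX') ℂ,
      IsCP T ∧ TNI T ∧ Loewner (T ΓX) ((((2 : ℝ) ^ (-y) : ℝ) : ℂ) • ΓX') ∧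
      pDist (tensorIdApply T (inputPurif (ρX' ⊗ₖ σXᵀ))) (ρX' ⊗ₖ σXᵀ) ≤ 0 } := by
    refine ⟨Real.logb 2 K, ?_⟩
    rintro y ⟨T', hCP, _hTNI, hLoew, hpd⟩
    have hτtr : (tensorIdApply T' (inputPurif (ρX' ⊗ₖ σXᵀ))).trace = (T' σX).trace := by
      rw [tensorIdApply_trace, hptr]
    have hfid := one_le_card_mul_trace hbig_psd hbig_tr hpd
    rw [hτtr, hcard] at hfid
    -- (T' σ).trace.re ≤ cσ * (T' Γ).trace.re
    have hb1 : (T' σX).trace.re ≤ cσ * (T' ΓX).trace.re := by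
      have h0 : 0 ≤ (T' ((cσ : ℂ) • ΓX - σX)).trace.re := cp_trace_nonneg hCP hcσ
      rw [map_sub, _root_.map_smul, Matrix.trace_sub, Matrix.trace_smul, Complex.sub_re,
        smul_eq_mul, Complex.re_ofReal_mul] at h0
      linarith
    have hb2 : (T' ΓX).trace.re ≤ ((2:ℝ)^(-y)) * ΓX'.trace.re := by
      have h1 := loewner_trace_re_le hLoew
      rwa [Matrix.trace_smul, smul_eq_mul, Complex.re_ofReal_mul] at h1
    have hb0 : 0 ≤ (T' ΓX).trace.re := cp_trace_nonneg hCP hΓX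
    have hchain : (1:ℝ) ≤ K * ((2:ℝ)^(-y)) := by
      have hd : (0:ℝ) ≤ (dX' * dX : ℝ) := by positivity
      calc (1:ℝ) ≤ (dX' * dX : ℝ) * (T' σX).trace.re := hfid
        _ ≤ (dX' * dX : ℝ) * (cσ * (T' ΓX).trace.re) := by nlinarith
        _ ≤ (dX' * dX : ℝ) * (cσ * (((2:ℝ)^(-y)) * ΓX'.trace.re)) := by nlinarith
        _ = K * ((2:ℝ)^(-y)) := by rw [hK_def]; ring
    -- deduce y ≤ logb 2 K
    have hKinv : 1 / K ≤ (2:ℝ)^(-y) := by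
      rw [div_le_iff₀ hKpos]
      linarith [hchain]
    have hlog := (Real.logb_le_logb (b := 2) (by norm_num) (by positivity)
      (Real.rpow_pos_of_pos (by norm_num) (-y))).mpr hKinv
    rw [Real.logb_rpow (b := 2) (by norm_num) (by norm_num)] at hlog
    have hlogdiv : Real.logb 2 (1 / K) = - Real.logb 2 K := by
      rw [one_div, Real.logb_inv]
    rw [hlogdiv] at hlog
    linarith
  -- conclude
  rw [DCoh]
  exact le_csSup hBdd hmem
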